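/- Let p be a polynomial in four complex variables (z₁, w₁, z₂, w₂) satisfying z₁·(∂p/∂z₁) = w₁·(∂p/∂w₁) and z₂·(∂p/∂z₂) = w₂·(∂p/∂w₂) identically. Then there exists a polynomial q in two variables such that p(z₁,w₁,z₂,w₂) = q(z₁w₁, z₂w₂). -/

import Mathlib

open MvPolynomial

lemma coeff_X_mul_pderiv (p : MvPolynomial (Fin 4) ℂ) (i : Fin 4) (d : Fin 4 →₀ ℕ) :
    coeff d (X i * pderiv i p) = (d i : ℂ) * coeff d p := by
  induction p using MvPolynomial.induction_on' with
  | monomial s a =>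
    rw [pderiv_monomial]
    by_cases hsi : s i = 0
    · simp only [hsi, Nat.cast_zero, mul_zero, monomial_zero, mul_zero, coeff_zero,
        coeff_monomial]
      split
      · next h => subst h; simp [hsi]
      · ring
    · have hX : (X i : MvPolynomial (Fin 4) ℂ) = monomial (Finsupp.single i 1) 1 := by
        simp [X]
      rw [hX, monomial_mul, one_mul]
      have hs : Finsupp.single i 1 + (s - Finsupp.single i 1) = s := by
        ext j
        simp only [Finsupp.coe_add, Pi.add_apply, Finsupp.coe_tsub, Pi.sub_apply,
          Finsupp.single_apply]
        split
        · next h => subst h; omega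
        · omega
      rw [hs, coeff_monomial, coeff_monomial]
      split
      · next h => subst h; ring
      · ring
  | add f g hf hg =>
    rw [map_add, mul_add, coeff_add, coeff_add, hf, hg, mul_add]

lemma support_eq_of_torus (p : MvPolynomial (Fin 4) ℂ) (i j : Fin 4)
    (h : X i * pderiv i p = X j * pderiv j p) (d : Fin 4 →₀ ℕ) (hd : d ∈ p.support) :
    d i = d j := by
  have := congrArg (coeff d) h
  rw [coeff_X_mul_pderiv, coeff_X_mul_pderiv] at this
  have hc : coeff d p ≠ 0 := by simpa using hd
  have : (d i : ℂ) = d j := mul_right_cancel₀ hc this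
  exact_mod_cast this

/-- NSNS structure lemma: a polynomial in `(z₁, w₁, z₂, w₂)` invariant under both
torus rotations, i.e. `z₁ ∂p/∂z₁ = w₁ ∂p/∂w₁` and `z₂ ∂p/∂z₂ = w₂ ∂p/∂w₂`,
is a polynomial in the two invariants `z₁ w₁` and `z₂ w₂`. -/
theorem nsns_invariant_polynomial (p : MvPolynomial (Fin 4) ℂ)
    (h₁ : X 0 * pderiv 0 p = X 1 * pderiv 1 p)
    (h₂ : X 2 * pderiv 2 p = X 3 * pderiv 3 p) :
    ∃ q : MvPolynomial (Fin 2) ℂ,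
      p = aeval ![(X 0 : MvPolynomial (Fin 4) ℂ) * X 1, X 2 * X 3] q := by
  refine ⟨∑ d ∈ p.support, C (coeff d p) * X 0 ^ d 0 * X 1 ^ d 2, ?_⟩
  rw [map_sum]
  conv_lhs => rw [p.as_sum]
  refine Finset.sum_congr rfl fun d hd => ?_
  have e1 : d 1 = d 0 := (support_eq_of_torus p 0 1 h₁ d hd).symm
  have e3 : d 3 = d 2 := (support_eq_of_torus p 2 3 h₂ d hd).symm
  rw [monomial_eq, Finsupp.prod_fintype _ _ (fun _ => pow_zero _), Fin.prod_univ_four]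
  simp only [map_mul, map_pow, algHom_C, aeval_X]
  rw [e1, e3]
  simp only [Matrix.cons_val_zero, Matrix.cons_val_one, Matrix.head_cons]
  rw [algebraMap_eq]; ring
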